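/- arXiv:1307.0174 — 2 statements merged into one kernel-verified Lean document; each statement's English description precedes it below -/
import Mathlib

section
/- Let {z_n} be a sequence in the open unit disk with z_n ≠ 0 for all n, and suppose (1 - |z_n|)/(1 - |z_{n-1}|) = c_n where c_n > 0 and c_n → 0. Then {z_n} is a thin Blaschke sequence: lim_{k→∞} ∏_{j ≠ k} d(z_k, z_j) = 1. -/
/-!
Write `a n = 1 - ‖z n‖`. From `1 - d(z,w)² = (1 - |z|²)(1 - |w|²) / |1 - w̄z|²` and
`|1 - w̄z| ≥ 1 - |w|` one gets `1 - d(z_k, z_j) ≤ 4 a_k / a_j`, and by symmetry `≤ 4 a_j / a_k`.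
Since `∏ x_j ≥ 1 - ∑ (1 - x_j)` for `x_j ∈ [0, 1]`, it suffices that
`∑_{j<k} a_k / a_j + ∑_{j>k} a_j / a_k → 0`. Once the ratios `a (n+1) / a n` are below `1/2`,
the second sum is at most `2 a_{k+1} / a_k`; the first one, `u_k`, satisfies
`u_{k+1} = (a_{k+1} / a_k) (u_k + 1)` and therefore tends to `0` with the ratios.
-/

open Metric Filter Topology

/-- The pseudohyperbolic distance on the unit disk. -/
noncomputable def pd (z w : ℂ) : ℝ := ‖(z - w) / (1 - (starRingEnd ℂ) w * z)‖

open Finset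

lemma pd_symm (z w : ℂ) : pd z w = pd w z := by
  rw [pd, pd, norm_div, norm_div, norm_sub_rev z w, ← Complex.norm_conj (1 - _ * w)]
  simp [mul_comm]

lemma one_sub_pd_sq {z w : ℂ} (h : (starRingEnd ℂ) w * z ≠ 1) :
    1 - pd z w ^ 2 = (1 - ‖z‖ ^ 2) * (1 - ‖w‖ ^ 2) / ‖1 - (starRingEnd ℂ) w * z‖ ^ 2 := by
  have hD : ‖1 - (starRingEnd ℂ) w * z‖ ≠ 0 := norm_ne_zero_iff.mpr (sub_ne_zero.mpr h.symm)
  rw [pd, norm_div, div_pow, eq_div_iff (pow_ne_zero 2 hD), sub_mul,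
    div_mul_cancel₀ _ (pow_ne_zero 2 hD)]
  simp only [Complex.sq_norm, Complex.normSq_apply, Complex.sub_re, Complex.sub_im, Complex.mul_re,
    Complex.mul_im, Complex.one_re, Complex.one_im, Complex.conj_re, Complex.conj_im]
  ring

lemma conj_mul_ne_one_of_norm_lt_one {z w : ℂ} (hz : ‖z‖ < 1) (hw : ‖w‖ < 1) :
    (starRingEnd ℂ) w * z ≠ 1 := by
  intro h
  have := congrArg norm h
  rw [norm_mul, Complex.norm_conj, norm_one] at this
  nlinarith [norm_nonneg z, norm_nonneg w]

lemma pd_le_one {z w : ℂ} (hz : ‖z‖ < 1) (hw : ‖w‖ < 1) : pd z w ≤ 1 := by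
  have h := one_sub_pd_sq (conj_mul_ne_one_of_norm_lt_one hz hw)
  have : 0 ≤ 1 - pd z w ^ 2 := h ▸ div_nonneg (mul_nonneg (by nlinarith [norm_nonneg z])
    (by nlinarith [norm_nonneg w])) (sq_nonneg _)
  nlinarith [norm_nonneg ((z - w) / (1 - (starRingEnd ℂ) w * z))]

lemma one_sub_pd_le {z w : ℂ} (hz : ‖z‖ < 1) (hw : ‖w‖ < 1) :
    1 - pd z w ≤ 4 * ((1 - ‖z‖) / (1 - ‖w‖)) := by
  have hD : 1 - ‖w‖ ≤ ‖1 - (starRingEnd ℂ) w * z‖ := by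
    have := norm_sub_norm_le (1 : ℂ) ((starRingEnd ℂ) w * z)
    rw [norm_one, norm_mul, Complex.norm_conj] at this
    nlinarith [norm_nonneg z, norm_nonneg w]
  have hpd : 0 ≤ pd z w := norm_nonneg _
  calc 1 - pd z w ≤ 1 - pd z w ^ 2 := by nlinarith [pd_le_one hz hw]
    _ = (1 - ‖z‖ ^ 2) * (1 - ‖w‖ ^ 2) / ‖1 - (starRingEnd ℂ) w * z‖ ^ 2 :=
      one_sub_pd_sq (conj_mul_ne_one_of_norm_lt_one hz hw)
    _ ≤ (2 * (1 - ‖z‖)) * (2 * (1 - ‖w‖)) / (1 - ‖w‖) ^ 2 := by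
      gcongr
      · nlinarith [norm_nonneg z, norm_nonneg w]
      · nlinarith [norm_nonneg z]
      · nlinarith [norm_nonneg w]
    _ = 4 * ((1 - ‖z‖) / (1 - ‖w‖)) := by field_simp; ring

lemma one_sub_sum_le_prod {ι R : Type*} [CommRing R] [LinearOrder R] [IsStrictOrderedRing R]
    (s : Finset ι) {f : ι → R} (h0 : ∀ i, 0 ≤ f i) (h1 : ∀ i, f i ≤ 1) :
    1 - ∑ i ∈ s, (1 - f i) ≤ ∏ i ∈ s, f i := by
  classical
  induction s using Finset.induction_on with
  | empty => simp
  | insert i s hi ih =>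
    rw [sum_insert hi, prod_insert hi]
    have hP : ∏ j ∈ s, f j ≤ 1 := prod_le_one (fun j _ => h0 j) (fun j _ => h1 j)
    nlinarith [h0 i, h1 i]

lemma tprod_mem_Icc_of_sum_one_sub_le {ι : Type*} {f : ι → ℝ} {S : ℝ}
    (hf : ∀ i, f i ∈ Set.Icc 0 1) (hS : ∀ s : Finset ι, ∑ i ∈ s, (1 - f i) ≤ S) :
    ∏' i, f i ∈ Set.Icc (1 - S) 1 := by
  by_cases hmul : Multipliable f
  · refine ⟨ge_of_tendsto hmul.hasProd (Eventually.of_forall fun s => ?_),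
      le_of_tendsto hmul.hasProd (Eventually.of_forall fun s =>
        prod_le_one (fun i _ => (hf i).1) fun i _ => (hf i).2)⟩
    exact (sub_le_sub_left (hS s) 1).trans
      (one_sub_sum_le_prod s (fun i => (hf i).1) fun i => (hf i).2)
  · rw [tprod_eq_one_of_not_multipliable hmul]
    exact ⟨by simpa using hS ∅, le_rfl⟩

lemma tendsto_zero_of_le_mul_add_one {u ρ : ℕ → ℝ} (hu : ∀ n, 0 ≤ u n)
    (hρ : Tendsto ρ atTop (𝓝 0)) (hrec : ∀ n, u (n + 1) ≤ ρ n * (u n + 1)) :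
    Tendsto u atTop (𝓝 0) := by
  obtain ⟨N, hN⟩ := eventually_atTop.mp (hρ.eventually (ge_mem_nhds one_half_pos))
  have hB : ∀ n ≥ N, u n ≤ u N + 1 := by
    refine Nat.le_induction (by linarith) fun n hn ih => ?_
    nlinarith [hrec n, hN n hn, hu n, hu N]
  refine (tendsto_add_atTop_iff_nat 1).mp (squeeze_zero' (Eventually.of_forall fun n => hu _) ?_
    (by simpa using hρ.abs.mul_const (u N + 2)))
  filter_upwards [eventually_ge_atTop N] with n hn
  nlinarith [hrec n, le_abs_self (ρ n), abs_nonneg (ρ n), hB n hn, hu n]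

lemma sum_range_succ_div_eq {a : ℕ → ℝ} (ha : ∀ n, a n ≠ 0) (k : ℕ) :
    ∑ j ∈ range (k + 1), a (k + 1) / a j
      = a (k + 1) / a k * (∑ j ∈ range k, a k / a j + 1) := by
  rw [sum_range_succ, mul_add, mul_sum, mul_one]
  congr 1
  refine sum_congr rfl fun j _ => ?_
  field_simp [ha k]

lemma tendsto_sum_range_div_of_tendsto_ratio {a : ℕ → ℝ} (ha : ∀ n, 0 < a n)
    (hρ : Tendsto (fun n => a (n + 1) / a n) atTop (𝓝 0)) :
    Tendsto (fun k => ∑ j ∈ range k, a k / a j) atTop (𝓝 0) :=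
  tendsto_zero_of_le_mul_add_one (fun k => sum_nonneg fun j _ => (div_pos (ha k) (ha j)).le) hρ
    fun k => (sum_range_succ_div_eq (fun n => (ha n).ne') k).le

lemma sum_range_le_of_ratio_le {a : ℕ → ℝ} {q : ℝ} {N : ℕ} (hq0 : 0 ≤ q) (hq1 : q < 1)
    (h : ∀ n ≥ N, a (n + 1) ≤ q * a n) {k : ℕ} (hk : N ≤ k) (hak : 0 ≤ a k) (n : ℕ) :
    ∑ i ∈ range n, a (k + i) ≤ a k / (1 - q) := by
  have hgeom : ∀ i, a (k + i) ≤ q ^ i * a k := fun i =>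
    le_geom (u := fun i => a (k + i)) hq0 i fun m _ => h (k + m) (by omega)
  calc ∑ i ∈ range n, a (k + i) ≤ (∑ i ∈ range n, q ^ i) * a k := by
        rw [sum_mul]; exact sum_le_sum fun i _ => hgeom i
    _ ≤ 1 / (1 - q) * a k := by
        refine mul_le_mul_of_nonneg_right ?_ hak
        have := geom_sum_Ico_le_of_lt_one (m := 0) (n := n) hq0 hq1
        rwa [← range_eq_Ico, pow_zero] at this
    _ = a k / (1 - q) := one_div_mul_eq_div _ _

lemma ite_pd_mem_Icc {z : ℕ → ℂ} (hz : ∀ n, ‖z n‖ < 1) (k j : ℕ) :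
    (if j = k then 1 else pd (z k) (z j)) ∈ Set.Icc 0 1 := by
  split_ifs
  · exact ⟨zero_le_one, le_rfl⟩
  · exact ⟨norm_nonneg _, pd_le_one (hz k) (hz j)⟩

lemma sum_one_sub_pd_le {z : ℕ → ℂ} (hz : ∀ n, ‖z n‖ < 1) {N k : ℕ}
    (hN : ∀ n ≥ N, 1 - ‖z (n + 1)‖ ≤ 1 / 2 * (1 - ‖z n‖)) (hk : N ≤ k) (s : Finset ℕ) :
    ∑ j ∈ s, (1 - if j = k then 1 else pd (z k) (z j)) ≤
      4 * (∑ j ∈ range k, (1 - ‖z k‖) / (1 - ‖z j‖)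
        + 2 * ((1 - ‖z (k + 1)‖) / (1 - ‖z k‖))) := by
  have ha : ∀ n, 0 < 1 - ‖z n‖ := fun n => sub_pos.mpr (hz n)
  have htail := sum_range_le_of_ratio_le (a := fun n => 1 - ‖z n‖) (by norm_num) (by norm_num)
    hN (k := k + 1) (by omega) (ha (k + 1)).le
  obtain ⟨n, hsn⟩ := s.exists_nat_subset_range
  calc ∑ j ∈ s, (1 - if j = k then 1 else pd (z k) (z j))
      ≤ ∑ j ∈ range (k + 1 + n), (1 - if j = k then 1 else pd (z k) (z j)) :=
        sum_le_sum_of_subset_of_nonneg (hsn.trans (range_mono (by omega)))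
          fun j _ _ => sub_nonneg.mpr (ite_pd_mem_Icc hz k j).2
    _ = ∑ j ∈ range k, (1 - pd (z k) (z j))
          + ∑ i ∈ range n, (1 - pd (z (k + 1 + i)) (z k)) := by
        rw [sum_range_add, sum_range_succ, if_pos rfl, sub_self, add_zero]
        congr 1 <;> refine sum_congr rfl fun j hj => ?_
        · rw [if_neg (by simp at hj; omega)]
        · rw [if_neg (by omega), pd_symm]
    _ ≤ ∑ j ∈ range k, 4 * ((1 - ‖z k‖) / (1 - ‖z j‖))
          + ∑ i ∈ range n, 4 * ((1 - ‖z (k + 1 + i)‖) / (1 - ‖z k‖)) :=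
        add_le_add (sum_le_sum fun j _ => one_sub_pd_le (hz k) (hz j))
          (sum_le_sum fun i _ => one_sub_pd_le (hz _) (hz k))
    _ ≤ _ := by
        rw [← mul_sum, ← mul_sum, ← sum_div, ← mul_add, mul_div_assoc']
        gcongr
        · exact (ha k).le
        · linarith [htail n,
            show (1 - ‖z (k + 1)‖) / (1 - 1 / 2 : ℝ) = 2 * (1 - ‖z (k + 1)‖) by ring]

theorem thin_of_ratio_tendsto_zero_general
    (z : ℕ → ℂ) (hz : ∀ n, z n ∈ ball (0:ℂ) 1)
    (c : ℕ → ℝ) (hc0 : Tendsto c atTop (𝓝 0))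
    (hrat : ∀ n, (1 - ‖z (n+1)‖) / (1 - ‖z n‖) = c (n+1)) :
    Tendsto (fun k => ∏' j : ℕ, if j = k then 1 else pd (z k) (z j))
      atTop (𝓝 1) := by
  have hz1 : ∀ n, ‖z n‖ < 1 := fun n => mem_ball_zero_iff.mp (hz n)
  have ha : ∀ n, 0 < 1 - ‖z n‖ := fun n => sub_pos.mpr (hz1 n)
  have hρ : Tendsto (fun n => (1 - ‖z (n + 1)‖) / (1 - ‖z n‖)) atTop (𝓝 0) :=
    (hc0.comp (tendsto_add_atTop_nat 1)).congr fun n => (hrat n).symm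
  obtain ⟨N, hN⟩ : ∃ N, ∀ n ≥ N, 1 - ‖z (n + 1)‖ ≤ 1 / 2 * (1 - ‖z n‖) := by
    obtain ⟨N, hN⟩ := eventually_atTop.mp (hρ.eventually (ge_mem_nhds one_half_pos))
    exact ⟨N, fun n hn => (div_le_iff₀ (ha n)).mp (hN n hn)⟩
  have hS := ((tendsto_sum_range_div_of_tendsto_ratio ha hρ).add (hρ.const_mul 2)).const_mul 4
  rw [mul_zero, add_zero, mul_zero] at hS
  have hprod {k : ℕ} (hk : N ≤ k) :=
    tprod_mem_Icc_of_sum_one_sub_le (ite_pd_mem_Icc hz1 k) (sum_one_sub_pd_le hz1 hN hk)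
  refine tendsto_of_tendsto_of_tendsto_of_le_of_le' (by simpa using tendsto_const_nhds.sub hS)
    tendsto_const_nhds ?_ ?_
  · filter_upwards [eventually_ge_atTop N] with k hk using (hprod hk).1
  · filter_upwards [eventually_ge_atTop N] with k hk using (hprod hk).2

theorem thin_of_ratio_tendsto_zero
    (z : ℕ → ℂ) (hz : ∀ n, z n ∈ ball (0:ℂ) 1) (hz0 : ∀ n, z n ≠ 0)
    (c : ℕ → ℝ) (hc : ∀ n, 0 < c n) (hc0 : Tendsto c atTop (𝓝 0))
    (hrat : ∀ n, (1 - ‖z (n+1)‖) / (1 - ‖z n‖) = c (n+1)) :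
    Tendsto (fun k => ∏' j : ℕ, if j = k then 1 else pd (z k) (z j))
      atTop (𝓝 1) :=
  thin_of_ratio_tendsto_zero_general z hz c hc0 hrat
end

section
/- Let B be a finite Blaschke product, and fix a point z₀ ∈ D lying outside the closed disk containing all zeros of B, namely with |z₀| ≥ t₀ := max{|z| : B(z) = 0} and let t₁ = max{|B(z)| : |z| ≤ t₀}. Then for any t with t₁ < t < 1, the set {z ∈ D : |B(z)| < t} is connected; it equals the unique component containing all the zeros of B. -/
/-!
Near the unit circle every Blaschke factor with zero in `closedBall 0 t₀` has modulus close to `1`,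
uniformly, so `S = {z ∈ 𝔻 : |B z| < t}` stays inside a smaller disc and `|B| = t` on its frontier.
By the maximum modulus principle applied to `1 / B`, each connected component of `S` contains a
zero of `B`; all zeros lie in the connected set `closedBall 0 t₀ ⊆ S`, so all components coincide.
The uniform estimate comes from the identity
`1 - |φₐ z|² = (1 - |a|²)(1 - |z|²) / |1 - ā z|²` for the factor `φₐ z = (a - z) / (1 - ā z)`.
-/

open Metric Filter Topology ComplexConjugate

section Topology

variable {α : Type*} [TopologicalSpace α]

theorem isConnected_of_forall_connectedComponentIn_inter_nonempty {K S : Set α}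
    (hK : IsConnected K) (hKS : K ⊆ S)
    (h : ∀ z ∈ S, (connectedComponentIn S z ∩ K).Nonempty) : IsConnected S := by
  obtain ⟨x, hx⟩ := hK.nonempty
  refine ⟨⟨x, hKS hx⟩, isPreconnected_of_forall x fun y hy => ?_⟩
  exact ⟨connectedComponentIn S y ∪ K, Set.union_subset (connectedComponentIn_subset _ _) hKS,
    Or.inr hx, Or.inl (mem_connectedComponentIn hy),
    isPreconnected_connectedComponentIn.union' (h y hy) hK.isPreconnected⟩

theorem IsOpen.frontier_connectedComponentIn_subset [LocallyConnectedSpace α] {S : Set α}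
    (hS : IsOpen S) (x : α) : frontier (connectedComponentIn S x) ⊆ frontier S := by
  intro y hy
  rw [hS.connectedComponentIn.frontier_eq] at hy
  rw [hS.frontier_eq]
  refine ⟨closure_mono (connectedComponentIn_subset S x) hy.1, fun hyS => hy.2 ?_⟩
  obtain ⟨w, hwy, hwx⟩ := mem_closure_iff_nhds.mp hy.1 _
    (hS.connectedComponentIn.mem_nhds (mem_connectedComponentIn hyS))
  rw [connectedComponentIn_eq hwx, ← connectedComponentIn_eq hwy]
  exact mem_connectedComponentIn hyS

end Topology

/-- A form of the minimum modulus principle. -/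
theorem exists_zero_mem_connectedComponentIn {E : Type*} [NormedAddCommGroup E]
    [NormedSpace ℂ E] [Nontrivial E] [LocallyConnectedSpace E] {f : E → ℂ} {S : Set E} {t : ℝ}
    (hS : IsOpen S) (hSb : Bornology.IsBounded S) (hf : DiffContOnCl ℂ f S)
    (hlt : ∀ z ∈ S, ‖f z‖ < t) (hfr : ∀ z ∈ frontier S, t ≤ ‖f z‖) {z : E} (hz : z ∈ S) :
    ∃ w ∈ connectedComponentIn S z, f w = 0 := by
  set V := connectedComponentIn S z
  by_contra! hV
  have ht : 0 < t := (norm_nonneg _).trans_lt (hlt z hz)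
  have hVfr : ∀ x ∈ frontier V, t ≤ ‖f x‖ :=
    fun x hx => hfr x (hS.frontier_connectedComponentIn_subset z hx)
  have hf0 : ∀ x ∈ closure V, f x ≠ 0 := by
    intro x hx hx0
    rcases (closure_eq_self_union_frontier V ▸ hx : x ∈ V ∪ frontier V) with hxV | hxV
    · exact hV x hxV hx0
    · exact ht.not_ge (by simpa [hx0] using hVfr x hxV)
  have hVS : V ⊆ S := connectedComponentIn_subset S z
  have hinv : DiffContOnCl ℂ (fun x => (f x)⁻¹) V :=
    ⟨fun x hx => ((hf.mono hVS).differentiableOn x hx).inv (hf0 x (subset_closure hx)),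
      fun x hx => ((hf.mono hVS).continuousOn x hx).inv₀ (hf0 x hx)⟩
  have hzV : z ∈ closure V := subset_closure (mem_connectedComponentIn hz)
  have hmax : ‖(f z)⁻¹‖ ≤ t⁻¹ :=
    Complex.norm_le_of_forall_mem_frontier_norm_le (hSb.subset hVS) hinv
      (fun x hx => by rw [norm_inv]; exact inv_anti₀ ht (hVfr x hx)) hzV
  rw [norm_inv, inv_le_inv₀ (norm_pos_iff.mpr (hf0 z hzV)) ht] at hmax
  exact (hlt z hz).not_ge hmax

noncomputable def blaschkeFactor (a z : ℂ) : ℂ := (a - z) / (1 - conj a * z)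

noncomputable def blaschkeProduct {ι : Type*} [Fintype ι] (c : ℂ) (a : ι → ℂ) (z : ℂ) : ℂ :=
  c * ∏ k, blaschkeFactor (a k) z

theorem norm_one_sub_conj_mul_sq (a z : ℂ) :
    ‖1 - conj a * z‖ ^ 2 = ‖a - z‖ ^ 2 + (1 - ‖a‖ ^ 2) * (1 - ‖z‖ ^ 2) := by
  simp only [Complex.sq_norm, Complex.normSq_apply, Complex.sub_re, Complex.sub_im,
    Complex.mul_re, Complex.mul_im, Complex.one_re, Complex.one_im, Complex.conj_re,
    Complex.conj_im]
  ring

theorem one_sub_norm_mul_le_norm_one_sub_conj_mul (a z : ℂ) :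
    1 - ‖a‖ * ‖z‖ ≤ ‖1 - conj a * z‖ := by
  simpa [norm_mul] using norm_sub_norm_le (1 : ℂ) (conj a * z)

section BlaschkeFactor

variable {a z : ℂ}

theorem one_sub_conj_mul_ne_zero (ha : ‖a‖ < 1) (hz : ‖z‖ < 1) : 1 - conj a * z ≠ 0 := by
  have := one_sub_norm_mul_le_norm_one_sub_conj_mul a z
  have : ‖a‖ * ‖z‖ < 1 := by nlinarith [norm_nonneg a, norm_nonneg z]
  exact norm_pos_iff.mp (by linarith)

theorem one_sub_norm_sq_blaschkeFactor (h : 1 - conj a * z ≠ 0) :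
    1 - ‖blaschkeFactor a z‖ ^ 2 = (1 - ‖a‖ ^ 2) * (1 - ‖z‖ ^ 2) / ‖1 - conj a * z‖ ^ 2 := by
  have hD : ‖1 - conj a * z‖ ^ 2 ≠ 0 := by positivity
  rw [blaschkeFactor, norm_div, div_pow, eq_div_iff hD, sub_mul, div_mul_cancel₀ _ hD,
    norm_one_sub_conj_mul_sq]
  ring

theorem norm_blaschkeFactor_le_one (ha : ‖a‖ < 1) (hz : ‖z‖ < 1) : ‖blaschkeFactor a z‖ ≤ 1 := by
  have h := one_sub_norm_sq_blaschkeFactor (one_sub_conj_mul_ne_zero ha hz)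
  have hnum : 0 ≤ (1 - ‖a‖ ^ 2) * (1 - ‖z‖ ^ 2) :=
    mul_nonneg (by nlinarith [norm_nonneg a]) (by nlinarith [norm_nonneg z])
  have hsq : ‖blaschkeFactor a z‖ ^ 2 ≤ 1 := by
    linarith [div_nonneg hnum (sq_nonneg ‖1 - conj a * z‖)]
  exact (sq_le_one_iff₀ (norm_nonneg _)).mp hsq

theorem one_sub_mul_le_norm_sq_blaschkeFactor {s : ℝ} (ha : ‖a‖ ≤ s) (hs : s < 1)
    (hz : ‖z‖ < 1) : 1 - (1 + s) / (1 - s) * (1 - ‖z‖ ^ 2) ≤ ‖blaschkeFactor a z‖ ^ 2 := by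
  have ha1 : ‖a‖ < 1 := ha.trans_lt hs
  have hD : 1 - ‖a‖ ≤ ‖1 - conj a * z‖ := by
    have := one_sub_norm_mul_le_norm_one_sub_conj_mul a z
    nlinarith [norm_nonneg a, norm_nonneg z]
  have hDpos : 0 < 1 - ‖a‖ := by linarith
  have hz2 : 0 ≤ 1 - ‖z‖ ^ 2 := by nlinarith [norm_nonneg z]
  have hquot : (1 - ‖a‖ ^ 2) / ‖1 - conj a * z‖ ^ 2 ≤ (1 + s) / (1 - s) := calc
    _ ≤ (1 - ‖a‖ ^ 2) / (1 - ‖a‖) ^ 2 := by gcongr; nlinarith [norm_nonneg a]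
    _ = (1 + ‖a‖) / (1 - ‖a‖) := by field_simp; ring
    _ ≤ (1 + s) / (1 - s) := by gcongr; linarith [norm_nonneg a]
  have h := one_sub_norm_sq_blaschkeFactor (one_sub_conj_mul_ne_zero ha1 hz)
  rw [mul_div_right_comm] at h
  nlinarith [mul_le_mul_of_nonneg_right hquot hz2]

end BlaschkeFactor

section BlaschkeProduct

variable {ι : Type*} [Fintype ι] {c : ℂ} {a : ι → ℂ}

theorem norm_blaschkeProduct (hc : ‖c‖ = 1) (z : ℂ) :
    ‖blaschkeProduct c a z‖ = ∏ k, ‖blaschkeFactor (a k) z‖ := by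
  rw [blaschkeProduct, norm_mul, hc, one_mul, norm_prod]

theorem differentiableOn_blaschkeProduct (ha : ∀ k, ‖a k‖ < 1) :
    DifferentiableOn ℂ (blaschkeProduct c a) (ball 0 1) := by
  intro z hz
  rw [mem_ball_zero_iff] at hz
  refine (DifferentiableAt.const_mul (DifferentiableAt.fun_finsetProd fun k _ => ?_) c)
    |>.differentiableWithinAt
  exact ((differentiableAt_const _).sub differentiableAt_id).div
    ((differentiableAt_const _).sub ((differentiableAt_const _).mul differentiableAt_id))
    (one_sub_conj_mul_ne_zero (ha k) hz)

theorem exists_eq_of_blaschkeProduct_eq_zero {z : ℂ} (hc : c ≠ 0) (ha : ∀ k, ‖a k‖ < 1)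
    (hz : ‖z‖ < 1)
    (h : blaschkeProduct c a z = 0) : ∃ k, a k = z := by
  obtain ⟨k, -, hk⟩ := Finset.prod_eq_zero_iff.mp ((mul_eq_zero.mp h).resolve_left hc)
  rw [blaschkeFactor, div_eq_zero_iff, sub_eq_zero] at hk
  exact ⟨k, hk.resolve_right (one_sub_conj_mul_ne_zero (ha k) hz)⟩

theorem exists_lt_one_forall_lt_norm_blaschkeProduct {s t : ℝ} (hc : ‖c‖ = 1)
    (ha : ∀ k, ‖a k‖ ≤ s) (hs : s < 1) (ht : t < 1) :
    ∃ r < 1, ∀ z : ℂ, r ≤ ‖z‖ → ‖z‖ < 1 → t < ‖blaschkeProduct c a z‖ := by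
  set h : ℝ → ℝ := fun ρ => 1 - (1 + s) / (1 - s) * (1 - ρ ^ 2)
  have hcont : Continuous h := by fun_prop
  have h1 : h 1 = 1 := by simp [h]
  have hnear : ∀ᶠ ρ in 𝓝[<] 1, 0 ≤ h ρ ∧ t < h ρ ^ Fintype.card ι := by
    refine nhdsWithin_le_nhds (Filter.Eventually.and ?_ ?_)
    · exact (continuousAt_const.eventually_lt hcont.continuousAt (by simp [h1])).mono
        fun _ => le_of_lt
    · exact continuousAt_const.eventually_lt (hcont.pow _).continuousAt (by simpa [h1])
  obtain ⟨r, hr, hrh⟩ := mem_nhdsLT_iff_exists_Ico_subset.mp hnear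
  refine ⟨r, hr, fun z hrz hz => ?_⟩
  obtain ⟨h0, htz⟩ := hrh ⟨hrz, hz⟩
  calc t < h ‖z‖ ^ Fintype.card ι := htz
    _ = ∏ _k : ι, h ‖z‖ := by rw [Finset.prod_const, Finset.card_univ]
    _ ≤ ∏ k, ‖blaschkeFactor (a k) z‖ := by
        refine Finset.prod_le_prod (fun _ _ => h0) fun k _ => ?_
        have hk1 := norm_blaschkeFactor_le_one ((ha k).trans_lt hs) hz
        have := one_sub_mul_le_norm_sq_blaschkeFactor (ha k) hs hz
        nlinarith [norm_nonneg (blaschkeFactor (a k) z)]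
    _ = ‖blaschkeProduct c a z‖ := (norm_blaschkeProduct hc z).symm

theorem isConnected_setOf_norm_blaschkeProduct_lt {s t : ℝ} (hc : ‖c‖ = 1)
    (ha : ∀ k, ‖a k‖ ≤ s) (hs₀ : 0 ≤ s) (hs : s < 1)
    (hst : ∀ z ∈ closedBall (0 : ℂ) s, ‖blaschkeProduct c a z‖ < t) (ht : t < 1) :
    IsConnected {z | z ∈ ball (0 : ℂ) 1 ∧ ‖blaschkeProduct c a z‖ < t} := by
  set S := {z | z ∈ ball (0 : ℂ) 1 ∧ ‖blaschkeProduct c a z‖ < t}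
  have ha1 : ∀ k, ‖a k‖ < 1 := fun k => (ha k).trans_lt hs
  have hdiff := differentiableOn_blaschkeProduct (c := c) ha1
  have hopen : IsOpen S :=
    hdiff.continuousOn.norm.isOpen_inter_preimage isOpen_ball isOpen_Iio
  obtain ⟨r, hr1, hr⟩ := exists_lt_one_forall_lt_norm_blaschkeProduct hc ha hs ht
  have hSr : S ⊆ ball 0 r := fun z hz => mem_ball_zero_iff.mpr <| lt_of_not_ge fun hrz =>
    (hr z hrz (mem_ball_zero_iff.mp hz.1)).not_gt hz.2
  have hclS : closure S ⊆ ball 0 1 :=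
    (closure_mono hSr).trans (closure_ball_subset_closedBall.trans (closedBall_subset_ball hr1))
  have hK : closedBall 0 s ⊆ S := fun z hz =>
    ⟨closedBall_subset_ball hs hz, hst z hz⟩
  refine isConnected_of_forall_connectedComponentIn_inter_nonempty
    (isConnected_closedBall hs₀) hK fun z hz => ?_
  obtain ⟨w, hwV, hw0⟩ := exists_zero_mem_connectedComponentIn hopen (isBounded_ball.subset hSr)
    (hdiff.mono hclS).diffContOnCl (fun z hz => hz.2)
    (fun x hx => not_lt.mp fun hxt => (hopen.frontier_eq ▸ hx).2 ⟨hclS hx.1, hxt⟩) hz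
  have hwS : ‖w‖ < 1 := mem_ball_zero_iff.mp (connectedComponentIn_subset S z hwV).1
  have hc0 : c ≠ 0 := norm_ne_zero_iff.mp (hc ▸ one_ne_zero)
  obtain ⟨k, rfl⟩ := exists_eq_of_blaschkeProduct_eq_zero hc0 ha1 hwS hw0
  exact ⟨a k, hwV, mem_closedBall_zero_iff.mpr (ha k)⟩

end BlaschkeProduct

theorem sublevel_set_connected_general
    (n : ℕ) (c : ℂ) (hc : ‖c‖ = 1)
    (a : Fin n → ℂ) (B : ℂ → ℂ)
    (hB : ∀ z ∈ ball (0:ℂ) 1,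
      B z = c * ∏ k, (a k - z) / (1 - (starRingEnd ℂ) (a k) * z))
    (t₀ : ℝ) (ht₀ : ∀ k, ‖a k‖ ≤ t₀) (ht₀1 : t₀ < 1)
    (t₁ : ℝ)
    (ht₁ : IsGreatest {y : ℝ | ∃ z : ℂ, ‖z‖ ≤ t₀ ∧ y = ‖B z‖} t₁)
    (t : ℝ) (ht : t₁ < t) (ht1 : t < 1) :
    IsConnected {z : ℂ | z ∈ ball (0:ℂ) 1 ∧ ‖B z‖ < t} := by
  obtain ⟨⟨z₀, hz₀, -⟩, hmax⟩ := ht₁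
  have hB' : ∀ z ∈ ball (0 : ℂ) 1, B z = blaschkeProduct c a z := hB
  have hS : {z : ℂ | z ∈ ball (0:ℂ) 1 ∧ ‖B z‖ < t} =
      {z | z ∈ ball 0 1 ∧ ‖blaschkeProduct c a z‖ < t} :=
    Set.ext fun z => and_congr_right fun hz => by rw [hB' z hz]
  rw [hS]
  refine isConnected_setOf_norm_blaschkeProduct_lt hc ht₀ ((norm_nonneg z₀).trans hz₀) ht₀1
    (fun z hz => ?_) ht1
  have hz1 : z ∈ ball (0 : ℂ) 1 := closedBall_subset_ball ht₀1 hz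
  calc ‖blaschkeProduct c a z‖ = ‖B z‖ := by rw [hB' z hz1]
    _ ≤ t₁ := hmax ⟨z, mem_closedBall_zero_iff.mp hz, rfl⟩
    _ < t := ht

theorem sublevel_set_connected
    (n : ℕ) (hn : 1 ≤ n) (c : ℂ) (hc : ‖c‖ = 1)
    (a : Fin n → ℂ) (ha : ∀ k, a k ∈ ball (0:ℂ) 1) (B : ℂ → ℂ)
    (hB : ∀ z ∈ ball (0:ℂ) 1,
      B z = c * ∏ k, (a k - z) / (1 - (starRingEnd ℂ) (a k) * z))
    (t₀ : ℝ) (ht₀ : ∀ k, ‖a k‖ ≤ t₀) (ht₀1 : t₀ < 1)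
    (t₁ : ℝ)
    (ht₁ : IsGreatest {y : ℝ | ∃ z : ℂ, ‖z‖ ≤ t₀ ∧ y = ‖B z‖} t₁)
    (t : ℝ) (ht : t₁ < t) (ht1 : t < 1) :
    IsConnected {z : ℂ | z ∈ ball (0:ℂ) 1 ∧ ‖B z‖ < t} :=
  sublevel_set_connected_general n c hc a B hB t₀ ht₀ ht₀1 t₁ ht₁ t ht ht1
end
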